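/- For every dual path a_1, …, a_n, there exists a crossing diagram c such that the set of labels {φ(a_1), …, φ(a_n)} equals the set of paths of c. (That is, the labels of the arrows along any path in the dual quiver between the two external vertices are the set of partitions associated to some crossing diagram.) -/

import Mathlib

/-- `lam : ℕ → ℕ` is a partition in the `r × (n-r)` box, with the conventions
`lam 0 = n - r` and `lam t = 0` for `t > r` built in. -/
def IsPartition (n r : ℕ) (lam : ℕ → ℕ) : Prop :=
  lam 0 = n - r ∧ (∀ t, r < t → lam t = 0) ∧ ∀ t, lam (t + 1) ≤ lam t

/-- The edge set `E(λ)` of the monotone lattice path of the partition `λ`. -/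
def pathEdges (r : ℕ) (lam : ℕ → ℕ) : Set ((ℕ × ℕ) × Bool) :=
  {e | (∃ t, 1 ≤ t ∧ t ≤ r ∧ e = ((lam t, r - t), true)) ∨
       (∃ t x, t ≤ r ∧ lam (t + 1) ≤ x ∧ x + 1 ≤ lam t ∧ e = ((x, r - t), false))}

/-- The internal ladder vertices `V° = {1,…,k-1} × {1,…,r-1}`. -/
def internalV (n r : ℕ) : Set (ℕ × ℕ) :=
  {p | 1 ≤ p.1 ∧ p.1 + 1 ≤ n - r ∧ 1 ≤ p.2 ∧ p.2 + 1 ≤ r}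

/-- The two endpoints of an edge. -/
def edgePts (e : (ℕ × ℕ) × Bool) : Set (ℕ × ℕ) :=
  {e.1, if e.2 then (e.1.1, e.1.2 + 1) else (e.1.1 + 1, e.1.2)}

/-- `λ` is a path of the crossing diagram `c : V° → {X, O}` (here `true = X`,
`false = O`). -/
def IsCrossingPath (n r : ℕ) (c : ℕ × ℕ → Bool) (lam : ℕ → ℕ) : Prop :=
  ∀ p ∈ internalV n r,
    (c p = true → ∀ e ∈ pathEdges r lam, p ∈ edgePts e →
      ∀ f ∈ pathEdges r lam, p ∈ edgePts f → e.2 = f.2) ∧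
    (c p = false → ∀ e ∈ pathEdges r lam, p ∈ edgePts e →
      ∀ f ∈ pathEdges r lam, p ∈ edgePts f → e ≠ f → e.2 ≠ f.2)

/-- The arrows of the dual quiver. -/
inductive DArrow where
  | horiz (t j : ℕ)
  | vert (t j : ℕ)
  | inAr
  | outAr
deriving DecidableEq

/-- The index constraints making a `DArrow` an actual arrow of the dual quiver. -/
def DArrow.valid (n r : ℕ) : DArrow → Prop
  | .horiz t j => 1 ≤ t ∧ t ≤ r ∧ 1 ≤ j ∧ j + 1 ≤ n - r
  | .vert t j => 1 ≤ t ∧ t + 1 ≤ r ∧ 1 ≤ j ∧ j ≤ n - r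
  | .inAr => True
  | .outAr => True

/-- The labeling `φ : 𝒟 → 𝒫(n,r)`: `φ(in) = (k^r)`, `φ(out) = ∅`,
`φ(horiz (t,j)) = ((k-j+1)^{r-t}, (k-j)^t)`, `φ(vert (t,j)) = (k^{r-t-1}, k-j+1, 0^t)`. -/
def DArrow.label (n r : ℕ) : DArrow → (ℕ → ℕ)
  | .inAr => fun s => if s ≤ r then n - r else 0
  | .outAr => fun s => if s = 0 then n - r else 0
  | .horiz t j => fun s =>
      if s = 0 then n - r
      else if s + t ≤ r then n - r - j + 1
      else if s ≤ r then n - r - j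
      else 0
  | .vert t j => fun s =>
      if s = 0 then n - r
      else if s + t < r then n - r
      else if s + t = r then n - r - j + 1
      else 0

/-- The source box of a dual arrow (`(0,0)` is the placeholder for the external vertex). -/
def DArrow.srcBox (n r : ℕ) : DArrow → ℕ × ℕ
  | .horiz t j => (t, j)
  | .vert t j => (t, j)
  | .inAr => (0, 0)
  | .outAr => (r, n - r)

/-- The target box of a dual arrow (`(0,0)` is the placeholder for the external vertex). -/
def DArrow.tgtBox (n r : ℕ) : DArrow → ℕ × ℕ
  | .horiz t j => (t, j + 1)
  | .vert t j => (t + 1, j)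
  | .inAr => (1, 1)
  | .outAr => (0, 0)

/-!
A dual path is a staircase of boxes from `(1, 1)` to `(r, k)`, determined by the columns `d t` at
which it leaves row `t` downwards (`d 0 = 1`, `d r = k`, `d` monotone). Its arrows are the two
external ones, the horizontal arrows `(t, j) → (t, j + 1)` with `d (t - 1) ≤ j < d t` and the
descents `(t, d t) → (t + 1, d t)`. The crossing diagram puts an `O` at `(x, y)` exactly when the
dual path visits the box `(y, k + 1 - x)`, so on the line at height `y` the `O`'s form the interval
`[k + 1 - d y, k + 1 - d (y - 1)]`, and the intervals of consecutive lines share an endpoint.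

A path of the diagram turns exactly at the `O`'s it meets. If it leaves the bottom line at
`0 < u < k`, it goes straight up through `X`'s until the first line with an `O` at `u`, moves right
by exactly one unit there (a longer run would cross an `O` without turning) and goes straight up
again: this is the label of a horizontal arrow. If it leaves the bottom line at `0`, it climbs the
left wall to some height `t`, runs right to the first `O` of that line, at `k + 1 - d t`, and on the
next line meets an `O` again, from which it runs to the right wall: this is the label of the descent
in row `t`. The remaining paths, along the bottom and right walls or along the left and top walls,
are the labels of the two external arrows.
-/

structure IsDualPath (n r : ℕ) (a : ℕ → DArrow) : Prop where
  first : a 1 = .inAr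
  last : a n = .outAr
  mid : ∀ i, 2 ≤ i → i < n → ∃ t j, a i = .horiz t j ∨ a i = .vert t j
  chain : ∀ i, 1 ≤ i → i < n → (a i).tgtBox n r = (a (i + 1)).srcBox n r

structure IsStaircase (k r : ℕ) (d : ℕ → ℕ) : Prop where
  zero : d 0 = 1
  last : d r = k
  mono : MonotoneOn d (Set.Iic r)

/-- The arrows of the dual path that leaves row `t` downwards at column `d t`. -/
def DArrow.OnStaircase (r : ℕ) (d : ℕ → ℕ) : DArrow → Prop
  | .horiz t j => 1 ≤ t ∧ t ≤ r ∧ d (t - 1) ≤ j ∧ j < d t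
  | .vert t j => 1 ≤ t ∧ t < r ∧ j = d t
  | .inAr => True
  | .outAr => True

namespace IsStaircase

variable {k r : ℕ} {d : ℕ → ℕ}

theorem le_of_le (hd : IsStaircase k r d) {s u : ℕ} (hsu : s ≤ u) (hu : u ≤ r) : d s ≤ d u :=
  hd.mono (Set.mem_Iic.2 (hsu.trans hu)) (Set.mem_Iic.2 hu) hsu

theorem one_le (hd : IsStaircase k r d) {s : ℕ} (hs : s ≤ r) : 1 ≤ d s :=
  hd.zero ▸ hd.le_of_le (Nat.zero_le s) hs

theorem le (hd : IsStaircase k r d) {s : ℕ} (hs : s ≤ r) : d s ≤ k :=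
  hd.last ▸ hd.le_of_le hs le_rfl

end IsStaircase

def lastIndex (n r : ℕ) (a : ℕ → DArrow) (t : ℕ) : ℕ :=
  Nat.findGreatest (fun i => ((a i).srcBox n r).1 ≤ t) n

/-- The column in which the dual path leaves row `t`: boxes at index `i ≥ 2` have row + column
`= i`. For `t = 0` the last index is that of the in-arrow, `1`, whose source box is `(0, 0)`. -/
def exitColumn (n r : ℕ) (a : ℕ → DArrow) (t : ℕ) : ℕ :=
  lastIndex n r a t - t

namespace IsDualPath

variable {n r : ℕ} {a : ℕ → DArrow}

theorem two_le (h : IsDualPath n r a) (hn : 0 < n) : 2 ≤ n := by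
  by_contra hlt
  have h1 : n = 1 := by omega
  have := h.last
  rw [h1, h.first] at this
  exact DArrow.noConfusion this

theorem step (h : IsDualPath n r a) {i : ℕ} (hi : 2 ≤ i) (hin : i < n) :
    ∃ t j, (a i).srcBox n r = (t, j) ∧
      (a i = .horiz t j ∧ (a (i + 1)).srcBox n r = (t, j + 1) ∨
        a i = .vert t j ∧ (a (i + 1)).srcBox n r = (t + 1, j)) := by
  obtain ⟨t, j, ha | ha⟩ := h.mid i hi hin <;> have hc := h.chain i (by omega) hin <;>
    rw [ha] at hc ⊢ <;> exact ⟨t, j, rfl, by simp [← hc, DArrow.tgtBox]⟩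

theorem srcBox_le_succ (h : IsDualPath n r a) {i : ℕ} (hi : 2 ≤ i) (hin : i < n) :
    (a i).srcBox n r ≤ (a (i + 1)).srcBox n r ∧
      ((a (i + 1)).srcBox n r).1 + ((a (i + 1)).srcBox n r).2 =
        ((a i).srcBox n r).1 + ((a i).srcBox n r).2 + 1 := by
  obtain ⟨t, j, hb, ⟨-, hb'⟩ | ⟨-, hb'⟩⟩ := h.step hi hin <;>
    simp only [hb, hb', Prod.mk_le_mk] <;> omega

theorem srcBox_mono (h : IsDualPath n r a) {i i' : ℕ} (hi : 2 ≤ i) (hii' : i ≤ i')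
    (hi' : i' ≤ n) : (a i).srcBox n r ≤ (a i').srcBox n r := by
  induction i', hii' using Nat.le_induction with
  | base => exact le_rfl
  | succ i' hii' ih => exact (ih (by omega)).trans (h.srcBox_le_succ (by omega) (by omega)).1

theorem srcBox_two (h : IsDualPath n r a) (hn : 2 ≤ n) : (a 2).srcBox n r = (1, 1) := by
  have := h.chain 1 le_rfl (by omega)
  rwa [h.first, eq_comm] at this

theorem row_add_col (h : IsDualPath n r a) (hn : 2 ≤ n) {i : ℕ} (hi : 2 ≤ i) (hin : i ≤ n) :
    ((a i).srcBox n r).1 + ((a i).srcBox n r).2 = i := by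
  induction i, hi using Nat.le_induction with
  | base => simp [h.srcBox_two hn]
  | succ i hi ih => rw [(h.srcBox_le_succ hi (by omega)).2, ih (by omega)]

theorem one_le_row (h : IsDualPath n r a) (hn : 2 ≤ n) {i : ℕ} (hi : 2 ≤ i) (hin : i ≤ n) :
    1 ≤ ((a i).srcBox n r).1 := by
  simpa [h.srcBox_two hn] using (Prod.le_def.1 (h.srcBox_mono le_rfl hi hin)).1

theorem row_le (h : IsDualPath n r a) {i : ℕ} (hi : 2 ≤ i) (hin : i ≤ n) :
    ((a i).srcBox n r).1 ≤ r := by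
  simpa [h.last, DArrow.srcBox] using (Prod.le_def.1 (h.srcBox_mono hi hin le_rfl)).1

theorem row_lastIndex_le (h : IsDualPath n r a) (hn : 1 ≤ n) (t : ℕ) :
    ((a (lastIndex n r a t)).srcBox n r).1 ≤ t :=
  Nat.findGreatest_spec (P := fun i => ((a i).srcBox n r).1 ≤ t) hn
    (by simp [h.first, DArrow.srcBox])

theorem row_le_iff_le_lastIndex (h : IsDualPath n r a) {i t : ℕ} (hi : 2 ≤ i) (hin : i ≤ n) :
    ((a i).srcBox n r).1 ≤ t ↔ i ≤ lastIndex n r a t :=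
  ⟨Nat.le_findGreatest (P := fun i => ((a i).srcBox n r).1 ≤ t) hin, fun hle =>
    (Prod.le_def.1 (h.srcBox_mono hi hle (Nat.findGreatest_le n))).1.trans
      (h.row_lastIndex_le (by omega) t)⟩

theorem row_succ_le (h : IsDualPath n r a) (hn : 2 ≤ n) {i : ℕ} (hi : 1 ≤ i) (hin : i < n) :
    ((a (i + 1)).srcBox n r).1 ≤ ((a i).srcBox n r).1 + 1 := by
  rcases hi.eq_or_lt with rfl | hi
  · simp [h.srcBox_two hn]
  obtain ⟨t, j, hb, ⟨-, hb'⟩ | ⟨-, hb'⟩⟩ := h.step hi hin <;> simp [hb, hb']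

theorem one_le_lastIndex (h : IsDualPath n r a) (hn : 1 ≤ n) (t : ℕ) :
    1 ≤ lastIndex n r a t :=
  Nat.le_findGreatest hn (by simp [h.first, DArrow.srcBox])

theorem lastIndex_zero (h : IsDualPath n r a) (hn : 2 ≤ n) : lastIndex n r a 0 = 1 := by
  have h1 := h.one_le_lastIndex (by omega) 0
  have h2 : ¬ 2 ≤ lastIndex n r a 0 := fun h2 =>
    absurd ((h.row_le_iff_le_lastIndex le_rfl hn).2 h2) (by simp [h.srcBox_two hn])
  omega

theorem lastIndex_self (h : IsDualPath n r a) : lastIndex n r a r = n :=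
  Nat.findGreatest_eq (by simp [h.last, DArrow.srcBox])

theorem lastIndex_lt (h : IsDualPath n r a) (hn : 2 ≤ n) {t : ℕ} (ht : t < r) :
    lastIndex n r a t < n := by
  by_contra hle
  have := (h.row_le_iff_le_lastIndex hn le_rfl).2 (not_lt.1 hle)
  simp only [h.last, DArrow.srcBox] at this
  omega

theorem lastIndex_succ (h : IsDualPath n r a) (hn : 2 ≤ n) {t : ℕ} (ht : t < r) :
    lastIndex n r a t + 1 ≤ lastIndex n r a (t + 1) := by
  have hlt := h.lastIndex_lt hn ht
  have hpos := h.one_le_lastIndex (by omega) t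
  refine (h.row_le_iff_le_lastIndex (i := lastIndex n r a t + 1) (by omega) hlt).1 ?_
  have := h.row_succ_le hn hpos hlt
  have := h.row_lastIndex_le (by omega) t
  omega

theorem isStaircase_exitColumn (h : IsDualPath n r a) (hn : 2 ≤ n) :
    IsStaircase (n - r) r (exitColumn n r a) where
  zero := by simp [exitColumn, h.lastIndex_zero hn]
  last := by simp [exitColumn, h.lastIndex_self]
  mono := monotoneOn_of_le_succ Set.ordConnected_Iic fun t _ _ ht => by
    have := h.lastIndex_succ hn (Order.succ_eq_add_one t ▸ ht : t + 1 ≤ r)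
    simp only [exitColumn, Order.succ_eq_add_one]
    omega

theorem onStaircase_exitColumn (h : IsDualPath n r a) (hn : 2 ≤ n) {i : ℕ} (hi : 1 ≤ i)
    (hin : i ≤ n) : (a i).OnStaircase r (exitColumn n r a) := by
  rcases hi.eq_or_lt with rfl | hi
  · simp [h.first, DArrow.OnStaircase]
  rcases hin.eq_or_lt with rfl | hin
  · simp [h.last, DArrow.OnStaircase]
  have hsum := h.row_add_col hn hi hin.le
  have hsum' := h.row_add_col hn (i := i + 1) (by omega) hin
  have hrow := h.one_le_row hn hi hin.le
  have hrow' := h.row_le (i := i + 1) (by omega) hin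
  have hle := (h.row_le_iff_le_lastIndex (t := ((a i).srcBox n r).1) hi hin.le).1 le_rfl
  obtain ⟨t, j, hb, ⟨ha, hb'⟩ | ⟨ha, hb'⟩⟩ := h.step hi hin <;>
    simp only [hb, hb'] at hsum hsum' hrow hrow' hle <;>
    simp only [ha, DArrow.OnStaircase, exitColumn]
  · have hprev : ¬ i ≤ lastIndex n r a (t - 1) := fun hle' => by
      have := (h.row_le_iff_le_lastIndex hi hin.le).2 hle'
      simp only [hb] at this
      omega
    have hnext : i + 1 ≤ lastIndex n r a t :=
      (h.row_le_iff_le_lastIndex (by omega) hin).1 (by simp [hb'])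
    omega
  · have hnext : ¬ i + 1 ≤ lastIndex n r a t := fun hle' => by
      have := (h.row_le_iff_le_lastIndex (by omega) hin).2 hle'
      simp only [hb'] at this
      omega
    omega

theorem exists_eq_of_onStaircase (h : IsDualPath n r a) (hn : 2 ≤ n) {b : DArrow}
    (hb : b.OnStaircase r (exitColumn n r a)) : ∃ i, 1 ≤ i ∧ i ≤ n ∧ a i = b := by
  cases b with
  | inAr => exact ⟨1, le_rfl, by omega, h.first⟩
  | outAr => exact ⟨n, by omega, le_rfl, h.last⟩
  | horiz t j =>
    obtain ⟨ht, htr, hj, hj'⟩ := hb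
    have hj1 := (h.isStaircase_exitColumn hn).one_le (s := t - 1) (by omega)
    have hlast : lastIndex n r a t ≤ n := Nat.findGreatest_le n
    simp only [exitColumn] at hj hj' hj1
    have hrow : t ≤ ((a (t + j)).srcBox n r).1 := by
      by_contra hlt
      have := (h.row_le_iff_le_lastIndex (i := t + j) (t := t - 1) (by omega) (by omega)).1
        (by omega)
      omega
    have hrow' : ((a (t + j + 1)).srcBox n r).1 ≤ t :=
      (h.row_le_iff_le_lastIndex (by omega) (by omega)).2 (by omega)
    have hsum := h.row_add_col hn (i := t + j) (by omega) (by omega)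
    refine ⟨t + j, by omega, by omega, ?_⟩
    obtain ⟨t', j', hb, ⟨ha, -⟩ | ⟨-, hb'⟩⟩ := h.step (i := t + j) (by omega) (by omega)
    · simp only [hb] at hrow hrow' hsum
      have := (Prod.le_def.1 (h.srcBox_le_succ (i := t + j) (by omega) (by omega)).1).1
      simp only [hb] at this
      rw [ha, show t' = t by omega, show j' = j by omega]
    · simp only [hb, hb'] at hrow hrow'
      omega
  | vert t j =>
    obtain ⟨ht, htr, rfl⟩ := hb
    have hlt := h.lastIndex_lt hn htr
    have h2 : 2 ≤ lastIndex n r a t :=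
      (h.row_le_iff_le_lastIndex le_rfl hn).1 (by simp only [h.srcBox_two hn]; omega)
    have hrow := h.row_lastIndex_le (by omega) t
    have hrow' : ¬ ((a (lastIndex n r a t + 1)).srcBox n r).1 ≤ t := fun hle => by
      have := (h.row_le_iff_le_lastIndex (by omega) hlt).1 hle
      omega
    have hsum := h.row_add_col hn h2 hlt.le
    refine ⟨lastIndex n r a t, by omega, hlt.le, ?_⟩
    obtain ⟨t', j', hb, ⟨-, hb'⟩ | ⟨ha, hb'⟩⟩ := h.step h2 hlt <;>
      simp only [hb, hb'] at hrow hrow' hsum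
    · exact absurd hrow hrow'
    · rw [ha, exitColumn, show t' = t by omega]
      congr 1
      omega

end IsDualPath

/-- `p y = λ (r - y)` is the right end of the horizontal run of the path of `λ` at height `y`,
so the path meets the line at height `y ≥ 1` in `[p (y - 1), p y]`. -/
def TurnsAt (p : ℕ → ℕ) (x y : ℕ) : Prop :=
  p (y - 1) = x ∧ x < p y ∨ p (y - 1) < x ∧ p y = x

def MatchesTurns (k r : ℕ) (c : ℕ × ℕ → Bool) (p : ℕ → ℕ) : Prop :=
  ∀ x y, 1 ≤ x → x + 1 ≤ k → 1 ≤ y → y + 1 ≤ r → p (y - 1) ≤ x → x ≤ p y →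
    (c (x, y) = false ↔ TurnsAt p x y)

section PathEdges

variable {r x y : ℕ} {lam : ℕ → ℕ}

theorem vertical_mem_pathEdges (hy : y < r) :
    ((x, y), true) ∈ pathEdges r lam ↔ lam (r - y) = x := by
  simp only [pathEdges, Set.mem_ofPred_eq, Prod.mk.injEq, Bool.true_eq_false, and_false,
    exists_false, or_false]
  constructor
  · rintro ⟨t, -, ht, ⟨rfl, rfl⟩, -⟩
    rw [Nat.sub_sub_self ht]
  · rintro rfl
    exact ⟨r - y, by omega, by omega, ⟨rfl, by omega⟩, trivial⟩

theorem horizontal_mem_pathEdges (hy : 1 ≤ y) (hyr : y ≤ r) :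
    ((x, y), false) ∈ pathEdges r lam ↔ lam (r - (y - 1)) ≤ x ∧ x < lam (r - y) := by
  simp only [pathEdges, Set.mem_ofPred_eq, Prod.mk.injEq, Bool.false_eq_true, and_false,
    exists_false, false_or, and_true]
  constructor
  · rintro ⟨t, x, ht, h1, h2, ⟨rfl, rfl⟩⟩
    rw [Nat.sub_sub_self ht, show r - (r - t - 1) = t + 1 by omega]
    omega
  · rintro ⟨h1, h2⟩
    exact ⟨r - y, x, by omega, by rwa [show r - y + 1 = r - (y - 1) by omega], by omega, rfl,
      by omega⟩

theorem mem_edgePts_iff {e : (ℕ × ℕ) × Bool} (hx : 1 ≤ x) (hy : 1 ≤ y) :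
    (x, y) ∈ edgePts e ↔ e = ((x, y), true) ∨ e = ((x, y - 1), true) ∨ e = ((x, y), false) ∨
      e = ((x - 1, y), false) := by
  obtain ⟨⟨u, v⟩, _ | _⟩ := e <;> grind [edgePts]

theorem forall_mem_pathEdges_at_iff (hx : 1 ≤ x) (hy : 1 ≤ y) (hyr : y < r)
    (P : (ℕ × ℕ) × Bool → Prop) :
    (∀ e ∈ pathEdges r lam, (x, y) ∈ edgePts e → P e) ↔
      (lam (r - y) = x → P ((x, y), true)) ∧
      (lam (r - (y - 1)) = x → P ((x, y - 1), true)) ∧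
      (lam (r - (y - 1)) ≤ x ∧ x < lam (r - y) → P ((x, y), false)) ∧
      (lam (r - (y - 1)) < x ∧ x ≤ lam (r - y) → P ((x - 1, y), false)) := by
  have hup := vertical_mem_pathEdges (lam := lam) (x := x) hyr
  have hdown := vertical_mem_pathEdges (r := r) (lam := lam) (x := x) (y := y - 1) (by omega)
  have hright := horizontal_mem_pathEdges (lam := lam) (x := x) hy hyr.le
  have hleft := horizontal_mem_pathEdges (lam := lam) (x := x - 1) hy hyr.le
  constructor
  · intro H
    refine ⟨fun h => H _ (hup.2 h) ((mem_edgePts_iff hx hy).2 (by simp)),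
      fun h => H _ (hdown.2 h) ((mem_edgePts_iff hx hy).2 (by simp)),
      fun h => H _ (hright.2 h) ((mem_edgePts_iff hx hy).2 (by simp)),
      fun h => H ((x - 1, y), false) (hleft.2 (by omega))
        ((mem_edgePts_iff hx hy).2 (by simp))⟩
  · rintro ⟨h1, h2, h3, h4⟩ e he hxe
    rcases (mem_edgePts_iff hx hy).1 hxe with rfl | rfl | rfl | rfl
    · exact h1 (hup.1 he)
    · exact h2 (hdown.1 he)
    · exact h3 (hright.1 he)
    · exact h4 (by have := hleft.1 he; omega)

end PathEdges

theorem isCrossingPath_iff {n r : ℕ} {c : ℕ × ℕ → Bool} {lam : ℕ → ℕ}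
    (hlam : ∀ s, lam (s + 1) ≤ lam s) :
    IsCrossingPath n r c lam ↔ MatchesTurns (n - r) r c (fun y => lam (r - y)) := by
  unfold IsCrossingPath MatchesTurns
  rw [Prod.forall]
  refine forall₂_congr fun x y => ?_
  simp only [internalV, Set.mem_ofPred_eq, and_imp]
  refine forall₄_congr fun hx hk hy hyr => ?_
  have hm := hlam (r - y)
  rw [show r - y + 1 = r - (y - 1) by omega] at hm
  simp only [forall_mem_pathEdges_at_iff hx hy (by omega : y < r)]
  cases c (x, y) <;> grind [TurnsAt]

/-- `O` (`false`) at `(x, y)` exactly when the staircase `d` visits the box `(y, k + 1 - x)`. -/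
def staircaseDiagram (k : ℕ) (d : ℕ → ℕ) (q : ℕ × ℕ) : Bool :=
  !(decide (d (q.2 - 1) + q.1 ≤ k + 1) && decide (k + 1 ≤ d q.2 + q.1))

theorem staircaseDiagram_eq_false_iff {k x y : ℕ} {d : ℕ → ℕ} :
    staircaseDiagram k d (x, y) = false ↔ d (y - 1) + x ≤ k + 1 ∧ k + 1 ≤ d y + x := by
  simp [staircaseDiagram]

namespace DArrow

variable {n r : ℕ} {d : ℕ → ℕ}

theorem label_zero (b : DArrow) : b.label n r 0 = n - r := by
  cases b <;> simp [label]

theorem label_eq_zero_of_lt (b : DArrow) {s : ℕ} (hs : r < s) : b.label n r s = 0 := by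
  cases b <;> simp only [label] <;> split_ifs <;> omega

theorem isPartition_label (hd : IsStaircase (n - r) r d) {b : DArrow} (hb : b.OnStaircase r d) :
    IsPartition n r (b.label n r) := by
  refine ⟨b.label_zero, fun s hs => b.label_eq_zero_of_lt hs, fun s => ?_⟩
  cases b with
  | horiz t j =>
    obtain ⟨ht, htr, hj, hj'⟩ := hb
    have := hd.le htr
    have := hd.one_le (s := t - 1) (by omega)
    grind [label]
  | vert t j =>
    obtain ⟨ht, htr, rfl⟩ := hb
    have := hd.one_le htr.le
    have := hd.le htr.le
    grind [label]
  | inAr => grind [label]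
  | outAr => grind [label]

theorem matchesTurns_label (hd : IsStaircase (n - r) r d) {b : DArrow} (hb : b.OnStaircase r d) :
    MatchesTurns (n - r) r (staircaseDiagram (n - r) d) (fun y => b.label n r (r - y)) := by
  intro x y hx hxk hy hyr h1 h2
  simp only [staircaseDiagram_eq_false_iff, TurnsAt]
  cases b with
  | horiz t j =>
    obtain ⟨ht, htr, hj, hj'⟩ := hb
    have := hd.le htr
    have : y < t → d y ≤ d (t - 1) := fun h => hd.le_of_le (by omega) (by omega)
    have : t < y → d t ≤ d (y - 1) := fun h => hd.le_of_le (by omega) (by omega)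
    grind [label]
  | vert t j =>
    obtain ⟨ht, htr, rfl⟩ := hb
    have := hd.le htr.le
    have := hd.le_of_le (s := y - 1) (u := y) (by omega) (by omega)
    have : t < y → d t ≤ d (y - 1) := fun h => hd.le_of_le (by omega) (by omega)
    obtain hyt | rfl | hyt := lt_trichotomy y t <;> grind [label]
  | inAr => grind [label]
  | outAr => grind [label]

end DArrow

theorem Monotone.exists_first_lt {p : ℕ → ℕ} (hp : Monotone p) {r : ℕ} (h : p 0 < p r) :
    ∃ t, 1 ≤ t ∧ t ≤ r ∧ p 0 < p t ∧ ∀ y < t, p y = p 0 := by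
  have hex : ∃ t, p 0 < p t := ⟨r, h⟩
  refine ⟨Nat.find hex, Nat.one_le_iff_ne_zero.2 fun h0 => ?_, Nat.find_min' hex h,
    Nat.find_spec hex, fun y hy => le_antisymm (not_lt.1 (Nat.find_min hex hy)) (hp y.zero_le)⟩
  have := Nat.find_spec hex
  rw [h0] at this
  exact lt_irrefl _ this

namespace MatchesTurns

variable {k r : ℕ} {d p : ℕ → ℕ}

theorem turnsAt_iff (hm : MatchesTurns k r (staircaseDiagram k d) p) {x y : ℕ} (hx : 1 ≤ x)
    (hxk : x + 1 ≤ k) (hy : 1 ≤ y) (hyr : y + 1 ≤ r) (h1 : p (y - 1) ≤ x) (h2 : x ≤ p y) :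
    TurnsAt p x y ↔ d (y - 1) + x ≤ k + 1 ∧ k + 1 ≤ d y + x := by
  rw [← hm x y hx hxk hy hyr h1 h2, staircaseDiagram_eq_false_iff]

theorem add_le_of_forall_eq (hd : IsStaircase k r d)
    (hm : MatchesTurns k r (staircaseDiagram k d) p) {u t : ℕ} (hu : 1 ≤ u) (huk : u < k)
    (ht : 1 ≤ t) (htr : t ≤ r) (hconst : ∀ y < t, p y = u) :
    u + d (t - 1) ≤ k := by
  induction t, ht using Nat.le_induction with
  | base => simp only [tsub_self, hd.zero]; omega
  | succ t ht ih =>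
    have ih := ih (by omega) fun y hy => hconst y (by omega)
    have hprev := hconst (t - 1) (by omega)
    have hcur := hconst t (by omega)
    have hstraight : ¬ TurnsAt p u t := by simp [TurnsAt, hprev, hcur]
    rw [hm.turnsAt_iff hu (by omega) ht (by omega) hprev.le hcur.ge] at hstraight
    simp only [Nat.add_sub_cancel]
    omega

theorem eq_add_one_of_lt (hm : MatchesTurns k r (staircaseDiagram k d) p) {u t : ℕ} (hu : 1 ≤ u)
    (ht : 1 ≤ t) (htr : t + 1 ≤ r) (hprev : p (t - 1) = u) (hlt : u < p t) (hpk : p t ≤ k)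
    (hrun : u + d (t - 1) ≤ k) : p t = u + 1 ∧ k + 1 ≤ u + d t := by
  have hturn := (hm.turnsAt_iff hu (by omega) ht htr hprev.le hlt.le).1 (Or.inl ⟨hprev, hlt⟩)
  refine ⟨?_, by omega⟩
  -- a longer run would pass straight through the `O` at `u + 1`
  by_contra hne
  have hstraight : ¬ TurnsAt p (u + 1) t := by simp only [TurnsAt]; omega
  exact hstraight ((hm.turnsAt_iff (by omega) (by omega) ht htr (by omega) (by omega)).2
    ⟨by omega, by omega⟩)

theorem succ_eq (hm : MatchesTurns k r (staircaseDiagram k d) p) (hp : Monotone p)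
    (hpr : p r = k) {y : ℕ} (hyr : y + 2 ≤ r) (hpos : 1 ≤ p y) (hlarge : k + 2 ≤ p y + d y) :
    p (y + 1) = p y := by
  have hle : p y ≤ p (y + 1) := hp (Nat.le_succ y)
  have hk : p (y + 1) ≤ k := hpr ▸ hp (by omega)
  by_contra hne
  have hturn := (hm.turnsAt_iff hpos (by omega) (Nat.le_add_left 1 y) (by omega)
    (le_of_eq (by simp)) hle).1 (Or.inl ⟨by simp, by omega⟩)
  simp only [Nat.add_sub_cancel] at hturn
  omega

theorem add_eq_of_zero_lt (hd : IsStaircase k r d)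
    (hm : MatchesTurns k r (staircaseDiagram k d) p) {t : ℕ} (ht : 1 ≤ t) (htr : t + 1 ≤ r)
    (hprev : p (t - 1) = 0) (hpos : 0 < p t)
    (hpk : p t ≤ k) : p t + d t = k + 1 := by
  have hmono := hd.le_of_le (Nat.sub_le t 1) (by omega : t ≤ r)
  have hdk := hd.le (by omega : t ≤ r)
  -- the run from the left wall cannot pass the first `O` of the line, at `k + 1 - d t`
  have hle : p t + d t ≤ k + 1 := by
    by_contra hgt
    have hstraight : ¬ TurnsAt p (k + 1 - d t) t := by simp only [TurnsAt]; omega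
    exact hstraight ((hm.turnsAt_iff (by omega) (by omega) ht htr (by omega) (by omega)).2
      ⟨by omega, by omega⟩)
  rcases hpk.eq_or_lt with hpk | hpk
  · have := hd.one_le (s := t) (by omega)
    omega
  · have := (hm.turnsAt_iff hpos hpk ht htr (by omega) le_rfl).1 (Or.inr ⟨by omega, rfl⟩)
    omega

theorem succ_eq_of_add_eq (hd : IsStaircase k r d)
    (hm : MatchesTurns k r (staircaseDiagram k d) p) (hp : Monotone p) (hpr : p r = k) {t : ℕ}
    (htr : t + 1 ≤ r) (hpt : p t + d t = k + 1) : p (t + 1) = k := by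
  have hle : p t ≤ p (t + 1) := hp (Nat.le_succ t)
  have hk : p (t + 1) ≤ k := hpr ▸ hp htr
  rcases htr.eq_or_lt with htr | htr
  · exact htr ▸ hpr
  by_contra hne
  have hdk := hd.le (by omega : t ≤ r)
  have hmono : d t ≤ d (t + 1) := hd.le_of_le (by omega) htr.le
  have hpk : p t < k := by omega
  -- `p t` is the last `O` of the next line: the path turns right there and meets no other `O`
  have hturn := (hm.turnsAt_iff (x := p t) (by omega) (by omega) (Nat.le_add_left 1 t) htr
    (by simp) hle).2 ⟨by rw [Nat.add_sub_cancel]; omega, by omega⟩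
  have hlt : p t < p (t + 1) := by simp only [TurnsAt, Nat.add_sub_cancel] at hturn; omega
  have := (hm.turnsAt_iff (x := p (t + 1)) (by omega) (by omega) (Nat.le_add_left 1 t) htr
    (by rw [Nat.add_sub_cancel]; omega) le_rfl).1 (Or.inr ⟨by simpa using hlt, rfl⟩)
  simp only [Nat.add_sub_cancel] at this
  omega

end MatchesTurns

namespace MatchesTurns

variable {n r : ℕ} {d p : ℕ → ℕ}

theorem exists_label_of_eq_zero (hd : IsStaircase (n - r) r d)
    (hm : MatchesTurns (n - r) r (staircaseDiagram (n - r) d) p) (hp : Monotone p)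
    (hpr : p r = n - r) (h0 : p 0 = 0) :
    ∃ b : DArrow, b.OnStaircase r d ∧ ∀ y < r, p y = b.label n r (r - y) := by
  have hk : 1 ≤ n - r := hd.last ▸ hd.one_le le_rfl
  obtain ⟨t, ht, htr, hpos, hbefore⟩ := hp.exists_first_lt (r := r) (by omega)
  rw [h0] at hpos hbefore
  rcases htr.eq_or_lt with rfl | htr
  · refine ⟨.outAr, trivial, fun y hy => ?_⟩
    rw [hbefore y hy]; simp only [DArrow.label]; split_ifs <;> omega
  have hpt := hm.add_eq_of_zero_lt hd ht htr (hbefore (t - 1) (by omega)) hpos (hpr ▸ hp htr.le)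
  have hnext := hm.succ_eq_of_add_eq hd hp hpr htr hpt
  refine ⟨.vert t (d t), ⟨ht, htr, rfl⟩, fun y hy => ?_⟩
  have hdk := hd.le htr.le
  obtain hyt | rfl | hyt := lt_trichotomy y t
  · rw [hbefore y hyt]; simp only [DArrow.label]; split_ifs <;> omega
  · simp only [DArrow.label]; split_ifs <;> omega
  · have : p y ≤ p r := hp hy.le
    have : p (t + 1) ≤ p y := hp hyt
    simp only [DArrow.label]; split_ifs <;> omega

theorem exists_label_of_pos (hd : IsStaircase (n - r) r d)
    (hm : MatchesTurns (n - r) r (staircaseDiagram (n - r) d) p) (hp : Monotone p)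
    (hpr : p r = n - r) (h0 : 0 < p 0) (h0k : p 0 < n - r) :
    ∃ b : DArrow, b.OnStaircase r d ∧ ∀ y < r, p y = b.label n r (r - y) := by
  obtain ⟨t, ht, htr, hjump, hbefore⟩ := hp.exists_first_lt (r := r) (by omega)
  have hrun := hm.add_le_of_forall_eq hd h0 h0k ht htr hbefore
  have hafter : t < r → p t = p 0 + 1 ∧ n - r + 1 ≤ p 0 + d t := fun htr =>
    hm.eq_add_one_of_lt h0 ht htr (hbefore (t - 1) (by omega)) hjump (hpr ▸ hp htr.le) hrun
  have hflat : ∀ y, t ≤ y → y < r → p y = p 0 + 1 := by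
    intro y hty
    induction y, hty using Nat.le_induction with
    | base => exact fun htr => (hafter htr).1
    | succ y hty ih =>
      intro hyr
      have hy := ih (by omega)
      have hdy := hd.le_of_le hty (by omega : y ≤ r)
      have := (hafter (by omega)).2
      rw [hm.succ_eq (y := y) hp hpr hyr (by omega) (by omega), hy]
  have hdt : n - r < p 0 + d t := by
    rcases htr.eq_or_lt with rfl | htr
    · rw [hd.last]; omega
    · exact (hafter htr).2
  refine ⟨.horiz t (n - r - p 0), ⟨ht, htr, by omega, by omega⟩, fun y hy => ?_⟩
  simp only [DArrow.label]
  rcases lt_or_ge y t with hyt | hyt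
  · rw [hbefore y hyt]; split_ifs <;> omega
  · rw [hflat y hyt hy]; split_ifs <;> omega

theorem exists_label (hd : IsStaircase (n - r) r d)
    (hm : MatchesTurns (n - r) r (staircaseDiagram (n - r) d) p) (hp : Monotone p)
    (hpr : p r = n - r) :
    ∃ b : DArrow, b.OnStaircase r d ∧ ∀ y < r, p y = b.label n r (r - y) := by
  rcases Nat.eq_zero_or_pos (p 0) with h0 | h0
  · exact hm.exists_label_of_eq_zero hd hp hpr h0
  rcases (hpr ▸ hp (Nat.zero_le r) : p 0 ≤ n - r).lt_or_eq with h0k | h0k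
  · exact hm.exists_label_of_pos hd hp hpr h0 h0k
  refine ⟨.inAr, trivial, fun y hy => ?_⟩
  simp only [DArrow.label]
  have := hp (Nat.zero_le y)
  have := hpr ▸ hp hy.le
  split_ifs <;> omega

end MatchesTurns

theorem IsPartition.eq_label {n r : ℕ} {lam : ℕ → ℕ} (hlam : IsPartition n r lam) {b : DArrow}
    (h : ∀ y < r, lam (r - y) = b.label n r (r - y)) : lam = b.label n r := by
  funext s
  rcases Nat.eq_zero_or_pos s with rfl | hs
  · rw [hlam.1, b.label_zero]
  rcases le_or_gt s r with hsr | hsr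
  · simpa [Nat.sub_sub_self hsr] using h (r - s) (by omega)
  · rw [hlam.2.1 s hsr, b.label_eq_zero_of_lt hsr]

theorem isPartition_and_isCrossingPath_iff {n r : ℕ} {d lam : ℕ → ℕ}
    (hd : IsStaircase (n - r) r d) :
    IsPartition n r lam ∧ IsCrossingPath n r (staircaseDiagram (n - r) d) lam ↔
      ∃ b : DArrow, b.OnStaircase r d ∧ lam = b.label n r := by
  constructor
  · rintro ⟨hlam, hcross⟩
    have hanti : Antitone lam := antitone_nat_of_succ_le hlam.2.2
    obtain ⟨b, hb, hprofile⟩ := ((isCrossingPath_iff hlam.2.2).1 hcross).exists_label hd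
      (fun y y' h => hanti (Nat.sub_le_sub_left h r)) (by simp [hlam.1])
    exact ⟨b, hb, hlam.eq_label hprofile⟩
  · rintro ⟨b, hb, rfl⟩
    have hpart := DArrow.isPartition_label hd hb
    exact ⟨hpart, (isCrossingPath_iff hpart.2.2).2 (DArrow.matchesTurns_label hd hb)⟩

theorem dual_path_labels_form_crossing_diagram_general (n r : ℕ) (hrn : r < n)
    (a : ℕ → DArrow)
    (hfirst : a 1 = DArrow.inAr) (hlast : a n = DArrow.outAr)
    (hmid : ∀ i, 2 ≤ i → i < n → ∃ t j, a i = DArrow.horiz t j ∨ a i = DArrow.vert t j)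
    (hchain : ∀ i, 1 ≤ i → i < n → DArrow.tgtBox n r (a i) = DArrow.srcBox n r (a (i + 1))) :
    ∃ c : ℕ × ℕ → Bool,
      {lam : ℕ → ℕ | ∃ i, 1 ≤ i ∧ i ≤ n ∧ lam = DArrow.label n r (a i)} =
      {lam : ℕ → ℕ | IsPartition n r lam ∧ IsCrossingPath n r c lam} := by
  have h : IsDualPath n r a := ⟨hfirst, hlast, hmid, hchain⟩
  have hn := h.two_le (Nat.zero_lt_of_lt hrn)
  refine ⟨staircaseDiagram (n - r) (exitColumn n r a), Set.ext fun lam => ?_⟩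
  rw [Set.mem_ofPred_eq, Set.mem_ofPred_eq,
    isPartition_and_isCrossingPath_iff (h.isStaircase_exitColumn hn)]
  constructor
  · rintro ⟨i, hi, hin, rfl⟩
    exact ⟨a i, h.onStaircase_exitColumn hn hi hin, rfl⟩
  · rintro ⟨b, hb, rfl⟩
    obtain ⟨i, hi, hin, rfl⟩ := h.exists_eq_of_onStaircase hn hb
    exact ⟨i, hi, hin, rfl⟩

/-- the labels of the arrows along any dual path (a path in the dual quiver
from the in-arrow to the out-arrow) form the set of paths of some crossing diagram. -/
theorem dual_path_labels_form_crossing_diagram (n r : ℕ) (hr : 1 ≤ r) (hrn : r < n)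
    (a : ℕ → DArrow)
    (hvalid : ∀ i, 1 ≤ i → i ≤ n → DArrow.valid n r (a i))
    (hfirst : a 1 = DArrow.inAr) (hlast : a n = DArrow.outAr)
    (hmid : ∀ i, 2 ≤ i → i < n → ∃ t j, a i = DArrow.horiz t j ∨ a i = DArrow.vert t j)
    (hchain : ∀ i, 1 ≤ i → i < n → DArrow.tgtBox n r (a i) = DArrow.srcBox n r (a (i + 1))) :
    ∃ c : ℕ × ℕ → Bool,
      {lam : ℕ → ℕ | ∃ i, 1 ≤ i ∧ i ≤ n ∧ lam = DArrow.label n r (a i)} =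
      {lam : ℕ → ℕ | IsPartition n r lam ∧ IsCrossingPath n r c lam} :=
  dual_path_labels_form_crossing_diagram_general n r hrn a hfirst hlast hmid hchain
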